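/- arXiv:2401.15406 — 4 statements merged into one kernel-verified Lean document; each statement's English description precedes it below -/
import Mathlib

section
/- Let N ≥ 2 be an integer and let 0 < λ < N−1. Then lim_{p→1^+} [ (1 − λ/(N−1)) / (1 − λ (p/(N−p))^p) − 1 ] · p/(p−1) = λ (N/(N−1) − log(N−1)) / (N−1−λ). -/
open Real Filter Topology

/-! The quantity under the limit is `p` times the difference quotient at `1` of
`p ↦ g 1 / g p`, where `g p = 1 - λ (p/(N-p))^p`; so the limit is `-g'(1)/g(1)`, and
`g'(1)` comes from logarithmic differentiation of `(p/(N-p))^p`. -/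

theorem hasDerivAt_div_const_sub_rpow_self {a c : ℝ} (ha : 0 < a) (hac : a < c) :
    HasDerivAt (fun p : ℝ => (p / (c - p)) ^ p)
      ((a / (c - a)) ^ a * (log (a / (c - a)) + c / (c - a))) a := by
  have hca : c - a ≠ 0 := (sub_pos.mpr hac).ne'
  have hbase : HasDerivAt (fun p : ℝ => p / (c - p)) (c / (c - a) ^ 2) a :=
    ((hasDerivAt_id' a).fun_div ((hasDerivAt_const a c).fun_sub (hasDerivAt_id' a)) hca).congr_deriv
      (by ring)
  refine (hbase.rpow (hasDerivAt_id' a) (by positivity)).congr_deriv ?_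
  rw [rpow_sub_one (by positivity)]
  field_simp
  ring

theorem HasDerivAt.tendsto_div_apply_sub_one_mul_div_sub {g : ℝ → ℝ} {g' a : ℝ}
    (hg : HasDerivAt g g' a) (ha : g a ≠ 0) :
    Tendsto (fun p => (g a / g p - 1) * (p / (p - a))) (𝓝[≠] a) (𝓝 (-(a * g') / g a)) := by
  have hslope := (hasDerivAt_iff_tendsto_slope.mp ((hasDerivAt_const a (g a)).fun_div hg ha)).mul
    (tendsto_id.mono_left (nhdsWithin_le_nhds : 𝓝[≠] a ≤ 𝓝 a))
  convert hslope using 2 with p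
  · simp only [slope_def_field, div_self ha, id_eq]
    ring
  · field_simp
    ring

theorem limit_ratio_minus_one_general (N : ℕ) (hN : 2 ≤ N) (l : ℝ) (hl : l < N - 1) :
    Filter.Tendsto
      (fun p : ℝ => ((1 - l / (N - 1)) / (1 - l * (p / (N - p)) ^ p) - 1) * (p / (p - 1)))
      (nhdsWithin 1 (Set.Ioi 1))
      (nhds (l * (N / (N - 1) - Real.log (N - 1)) / (N - 1 - l))) := by
  have hN1 : (0 : ℝ) < N - 1 := by
    have : (2 : ℝ) ≤ N := by exact_mod_cast hN
    linarith
  have hderiv := ((hasDerivAt_div_const_sub_rpow_self one_pos (sub_pos.mp hN1)).const_mul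
    l).const_sub 1
  have hg1 : (1 : ℝ) - l * (1 / (N - 1)) ^ (1 : ℝ) = 1 - l / (N - 1) := by
    rw [rpow_one, mul_one_div]
  have hg1_ne : (1 : ℝ) - l / (N - 1) ≠ 0 := by
    rw [sub_ne_zero, ne_comm, Ne, div_eq_one_iff_eq hN1.ne']
    exact hl.ne
  have hlim := (hderiv.tendsto_div_apply_sub_one_mul_div_sub (by rwa [hg1])).mono_left
    (nhdsGT_le_nhdsNE 1)
  rw [hg1] at hlim
  convert hlim using 2
  rw [rpow_one, log_div one_ne_zero hN1.ne', log_one]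
  field_simp
  ring

/-- For `0 < λ < N-1`,
`lim_{p→1⁺} [ (1 - λ/(N-1)) / (1 - λ (p/(N-p))^p) - 1 ] · p/(p-1)
  = λ (N/(N-1) - log(N-1)) / (N-1-λ)`. -/
theorem limit_ratio_minus_one (N : ℕ) (hN : 2 ≤ N) (l : ℝ) (hl0 : 0 < l) (hl : l < N - 1) :
    Filter.Tendsto
      (fun p : ℝ => ((1 - l / (N - 1)) / (1 - l * (p / (N - p)) ^ p) - 1) * (p / (p - 1)))
      (nhdsWithin 1 (Set.Ioi 1))
      (nhds (l * (N / (N - 1) - Real.log (N - 1)) / (N - 1 - l))) :=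
  limit_ratio_minus_one_general N hN l hl
end

section
/- Let N ≥ 2 be an integer and let 0 < λ < N−1. Then lim_{p→1^+} [ (1 − λ/(N−1)) / (1 − λ (p/(N−p))^p) ]^{p/(p−1)} = exp( λ (N/(N−1) − log(N−1)) / (N−1−λ) ). In particular this family of quantities is bounded for p in a right neighbourhood of 1. -/
open Real Filter Set in
/-- For `0 < λ < N-1`,
`lim_{p→1⁺} [ (1 - λ/(N-1)) / (1 - λ (p/(N-p))^p) ]^{p/(p-1)}
  = exp( λ (N/(N-1) - log(N-1)) / (N-1-λ) )`. -/
theorem limit_ratio_power (N : ℕ) (hN : 2 ≤ N) (l : ℝ) (hl0 : 0 < l) (hl : l < N - 1) :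
    Filter.Tendsto
      (fun p : ℝ => ((1 - l / (N - 1)) / (1 - l * (p / (N - p)) ^ p)) ^ (p / (p - 1)))
      (nhdsWithin 1 (Set.Ioi 1))
      (nhds (Real.exp (l * (N / (N - 1) - Real.log (N - 1)) / (N - 1 - l)))) := by
  set n : ℝ := (N : ℝ) with hn
  have hn2 : (2:ℝ) ≤ n := by rw [hn]; exact_mod_cast hN
  have hn1 : (0:ℝ) < n - 1 := by linarith
  have hA : (0:ℝ) < 1 - l / (n - 1) := by
    rw [sub_pos, div_lt_one hn1]; exact hl
  set φ : ℝ → ℝ := fun p => (p / (n - p)) ^ p with hφdef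
  -- derivative of φ at 1
  have hf : HasDerivAt (fun p : ℝ => p / (n - p)) ((1 * (n - 1) - 1 * (-1)) / (n - 1) ^ 2) 1 := by
    have h1 : HasDerivAt (fun p : ℝ => p) 1 1 := hasDerivAt_id 1
    have h2 : HasDerivAt (fun p : ℝ => n - p) (-1) 1 := h1.const_sub n
    exact h1.div h2 (by simpa using hn1.ne')
  have hfpos : (0:ℝ) < (1:ℝ) / (n - 1) := by positivity
  have hφ : HasDerivAt φ
      ((1 * (n - 1) - 1 * (-1)) / (n - 1) ^ 2 * 1 * ((1:ℝ) / (n - 1)) ^ ((1:ℝ) - 1)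
        + 1 * ((1:ℝ) / (n - 1)) ^ (1:ℝ) * Real.log ((1:ℝ) / (n - 1))) 1 := by
    simpa using hf.rpow (hasDerivAt_id 1) (by simpa using hfpos)
  have hφ1 : φ 1 = 1 / (n - 1) := by simp [hφdef]
  have hden1 : 1 - l * φ 1 = 1 - l / (n - 1) := by rw [hφ1]; ring
  -- continuity: eventually positive denominator
  have hposev : ∀ᶠ p in nhds (1:ℝ), 0 < 1 - l * φ p := by
    have hc : ContinuousAt (fun p => 1 - l * φ p) 1 :=
      (continuousAt_const.sub (continuousAt_const.mul hφ.continuousAt))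
    have : (0:ℝ) < 1 - l * φ 1 := by rw [hden1]; exact hA
    exact continuousAt_const.eventually_lt hc this
  -- h and its derivative
  set h : ℝ → ℝ := fun p => Real.log ((1 - l / (n - 1)) / (1 - l * φ p)) with hhdef
  set D : ℝ := ((1 * (n - 1) - 1 * (-1)) / (n - 1) ^ 2 * 1 * ((1:ℝ) / (n - 1)) ^ ((1:ℝ) - 1)
        + 1 * ((1:ℝ) / (n - 1)) ^ (1:ℝ) * Real.log ((1:ℝ) / (n - 1))) with hDdef
  have hdenD : HasDerivAt (fun p => 1 - l * φ p) (-(l * D)) 1 := by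
    simpa using (hφ.const_mul l).const_sub 1
  have hlog : HasDerivAt (fun p => Real.log (1 - l / (n - 1)) - Real.log (1 - l * φ p))
      (-((-(l * D)) / (1 - l * φ 1))) 1 :=
    (hdenD.log (by rw [hden1]; exact hA.ne')).const_sub _
  have hh : HasDerivAt h (-((-(l * D)) / (1 - l * φ 1))) 1 := by
    apply hlog.congr_of_eventuallyEq
    filter_upwards [hposev] with p hp
    rw [hhdef]
    exact Real.log_div hA.ne' hp.ne'
  have hh1 : h 1 = 0 := by
    rw [hhdef]
    simp only [hden1]
    rw [div_self hA.ne', Real.log_one]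
  -- value of the derivative
  have hderval : -((-(l * D)) / (1 - l * φ 1)) = l * (n / (n - 1) - Real.log (n - 1)) / (n - 1 - l) := by
    rw [hden1, hDdef]
    rw [one_div, Real.log_inv, Real.rpow_one]
    norm_num
    have h1 : n - 1 - l ≠ 0 := by linarith
    have h2 : (n:ℝ) - 1 ≠ 0 := hn1.ne'
    field_simp
    ring
  rw [← hderval] at *
  -- slope convergence
  have hslope : Tendsto (slope h 1) (nhdsWithin 1 (Set.Ioi 1)) (nhds (-((-(l * D)) / (1 - l * φ 1)))) := by
    have := hasDerivAt_iff_tendsto_slope.mp hh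
    exact this.mono_left (nhdsWithin_mono 1 (fun x hx => ne_of_gt hx))
  have hid : Tendsto (fun p : ℝ => p) (nhdsWithin 1 (Set.Ioi 1)) (nhds 1) :=
    tendsto_id.mono_left nhdsWithin_le_nhds
  have hmul : Tendsto (fun p => p * slope h 1 p) (nhdsWithin 1 (Set.Ioi 1))
      (nhds (-((-(l * D)) / (1 - l * φ 1)))) := by
    have := hid.mul hslope
    simpa using this
  have hexp : Tendsto (fun p => Real.exp (p * slope h 1 p)) (nhdsWithin 1 (Set.Ioi 1))
      (nhds (Real.exp (-((-(l * D)) / (1 - l * φ 1))))) :=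
    (Real.continuous_exp.continuousAt.tendsto).comp hmul
  apply hexp.congr'
  filter_upwards [hposev.filter_mono nhdsWithin_le_nhds, self_mem_nhdsWithin] with p hp hp1
  have hB : 0 < (1 - l / (n - 1)) / (1 - l * φ p) := div_pos hA hp
  have hB : 0 < (1 - l / (n - 1)) / (1 - l * ((p / (n - p)) ^ p)) := div_pos hA hp
  rw [Real.rpow_def_of_pos hB, slope_def_field, hh1, sub_zero]
  congr 1
  have hval : h p = Real.log ((1 - l / (n - 1)) / (1 - l * ((p / (n - p)) ^ p))) := rfl
  rw [hval]
  ring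
end

section
/- Let N ≥ 2 be an integer, let R > N, and fix x ∈ ℝ^N with ‖x‖ < R. Define v_p(x) = (1/N)^{1/(p−1)} · ((p−1)/p) · ( R^{p/(p−1)} − ‖x‖^{p/(p−1)} ). Then v_p(x) tends to +∞ as p → 1^+. -/
/-! With `t = 1 / (p - 1)` one has `p / (p - 1) = 1 + t` and `(p - 1) / p = 1 / (1 + t)`, so
`v_p(x) = (1/N)^t (R^(1+t) - ‖x‖^(1+t)) / (1 + t) ≥ (R - ‖x‖) (R/N)^t / (1 + t)`,
which tends to infinity as `t → ∞` since `R / N > 1`: exponential growth beats linear growth. -/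

open Filter Real Topology

theorem tendsto_rpow_div_one_add_atTop {a : ℝ} (ha : 1 < a) :
    Tendsto (fun t : ℝ => a ^ t / (1 + t)) atTop atTop := by
  have ha0 : 0 < a := one_pos.trans ha
  have hlog : 0 < log a := log_pos ha
  have h : Tendsto (fun s : ℝ => exp (log a * s) / (log a * s)) atTop atTop := by
    simpa [Function.comp_def] using (tendsto_exp_div_pow_atTop 1).comp
      (tendsto_id.const_mul_atTop hlog)
  have h' := (h.const_mul_atTop (mul_pos hlog (inv_pos.2 ha0))).comp
    (tendsto_atTop_add_const_left atTop 1 tendsto_id)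
  -- `a ^ t / (1 + t) = (log a / a) * (exp s / s)` with `s = log a * (1 + t)`
  refine h'.congr' ?_
  filter_upwards [eventually_gt_atTop 0] with t ht
  simp only [Function.comp, id, ← rpow_def_of_pos ha0, rpow_add ha0, rpow_one]
  field_simp

theorem sub_mul_rpow_le_rpow_one_add_sub_rpow_one_add {r R t : ℝ} (hr : 0 ≤ r) (hrR : r ≤ R)
    (ht : 0 ≤ t) : (R - r) * R ^ t ≤ R ^ (1 + t) - r ^ (1 + t) := by
  have hR : 0 ≤ R := hr.trans hrR
  rw [rpow_add' hR (by positivity), rpow_add' hr (by positivity), rpow_one, rpow_one]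
  nlinarith [mul_le_mul_of_nonneg_left (rpow_le_rpow hr hrR ht) hr]

theorem tendsto_one_div_sub_one_nhdsGT_one :
    Tendsto (fun p : ℝ => 1 / (p - 1)) (𝓝[>] 1) atTop := by
  have h : Tendsto (fun p : ℝ => p - 1) (𝓝[>] 1) (𝓝[>] 0) := by
    refine tendsto_nhdsWithin_of_tendsto_nhds_of_eventually_within _ ?_ ?_
    · simpa using
        (continuous_sub_right (1 : ℝ)).continuousWithinAt.tendsto (x := 1) (s := Set.Ioi 1)
    · filter_upwards [self_mem_nhdsWithin] with p hp using sub_pos.2 (Set.mem_Ioi.1 hp)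
  simpa [Function.comp_def] using tendsto_inv_nhdsGT_zero.comp h

theorem tendsto_rpow_div_one_add_mul_rpow_one_add_sub_atTop {c r R : ℝ} (hc : 0 < c)
    (hr : 0 ≤ r) (hrR : r < R) (hcR : 1 < c * R) :
    Tendsto (fun t : ℝ => c ^ t / (1 + t) * (R ^ (1 + t) - r ^ (1 + t))) atTop atTop := by
  refine tendsto_atTop_mono' _ ?_
    ((tendsto_rpow_div_one_add_atTop hcR).const_mul_atTop (sub_pos.2 hrR))
  filter_upwards [eventually_ge_atTop 0] with t ht
  calc (R - r) * ((c * R) ^ t / (1 + t)) = c ^ t / (1 + t) * ((R - r) * R ^ t) := by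
        rw [mul_rpow hc.le (hr.trans hrR.le)]; ring
    _ ≤ c ^ t / (1 + t) * (R ^ (1 + t) - r ^ (1 + t)) := by
        gcongr
        exact sub_mul_rpow_le_rpow_one_add_sub_rpow_one_add hr hrR.le ht

/-- For `R > N` and `‖x‖ < R`, the explicit torsion solutions
`v_p(x) = (1/N)^{1/(p-1)} ((p-1)/p) (R^{p/(p-1)} - ‖x‖^{p/(p-1)})` blow up as `p → 1⁺`. -/
theorem torsion_solution_blowup (N : ℕ) (hN : 2 ≤ N) (R : ℝ) (hR : (N : ℝ) < R)
    (x : EuclideanSpace ℝ (Fin N)) (hx : ‖x‖ < R) :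
    Filter.Tendsto
      (fun p : ℝ => (1 / N) ^ (1 / (p - 1)) * ((p - 1) / p) *
        (R ^ (p / (p - 1)) - ‖x‖ ^ (p / (p - 1))))
      (nhdsWithin 1 (Set.Ioi 1)) Filter.atTop := by
  have hN0 : (0 : ℝ) < N := Nat.cast_pos.2 (by omega)
  have hNR : 1 < 1 / (N : ℝ) * R := by rwa [one_div_mul_eq_div, one_lt_div hN0]
  refine ((tendsto_rpow_div_one_add_mul_rpow_one_add_sub_atTop (one_div_pos.2 hN0)
    (norm_nonneg x) hx hNR).comp tendsto_one_div_sub_one_nhdsGT_one).congr' ?_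
  filter_upwards [self_mem_nhdsWithin] with p hp
  have hp1 : p - 1 ≠ 0 := (sub_pos.2 (Set.mem_Ioi.1 hp)).ne'
  have hexp : 1 + 1 / (p - 1) = p / (p - 1) := by field_simp; ring
  rw [Function.comp_apply, hexp, div_div_eq_mul_div, mul_div_assoc]
end

section
/- Let N ≥ 2 be an integer and let 0 ≤ b ≤ 1, and set 1*_b = N/(N−1+b). Then there exists a constant C > 0 such that for every u ∈ C_c^∞(ℝ^N), ( ∫_{ℝ^N} |u(x)|^{1*_b} / ‖x‖^{b·1*_b} dx )^{1/1*_b} ≤ C ∫_{ℝ^N} ‖∇u(x)‖ dx. -/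
open MeasureTheory Set ENNReal Module

private lemma wsi_hardy_pointwise {N : ℕ} (u : EuclideanSpace ℝ (Fin N) → ℝ)
    (hu : ContDiff ℝ 1 u) (h2u : HasCompactSupport u)
    {x : EuclideanSpace ℝ (Fin N)} (hx : x ≠ 0) :
    (‖u x‖₊ : ℝ≥0∞) / ‖x‖₊ ≤ ∫⁻ s in Ioi (1:ℝ), (‖fderiv ℝ u (s • x)‖₊ : ℝ≥0∞) := by
  have hxn : 0 < ‖x‖ := norm_pos_iff.mpr hx
  obtain ⟨R, hR⟩ := (h2u : IsCompact (tsupport u)).isBounded.subset_closedBall 0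
  set T : ℝ := max R 0 / ‖x‖ + 1 with hT
  have hT1 : 1 ≤ T := le_add_of_nonneg_left (div_nonneg (le_max_right R 0) hxn.le)
  have hzero : ∀ s : ℝ, T ≤ s → u (s • x) = 0 := by
    intro s hs
    apply image_eq_zero_of_notMem_tsupport
    intro hmem
    have h1 := hR hmem
    have hs0 : (0:ℝ) < s := lt_of_lt_of_le (by linarith) hs
    rw [Metric.mem_closedBall, dist_zero_right, norm_smul, Real.norm_eq_abs,
      abs_of_pos hs0] at h1
    have hTx : T * ‖x‖ = max R 0 + ‖x‖ := by rw [hT, add_mul, div_mul_cancel₀ _ hxn.ne', one_mul]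
    have h2 : T * ‖x‖ ≤ s * ‖x‖ := by nlinarith
    have h3 := le_max_left R 0
    nlinarith
  set g' : ℝ → ℝ := fun s => fderiv ℝ u (s • x) x with hg'
  have hderiv : ∀ s : ℝ, HasDerivAt (fun t : ℝ => u (t • x)) (g' s) s := by
    intro s
    have h1 : HasDerivAt (fun t : ℝ => t • x) x s := by
      simpa using (hasDerivAt_id s).smul_const x
    exact ((hu.differentiable one_ne_zero (s • x)).hasFDerivAt).comp_hasDerivAt s h1
  have hcf : Continuous fun s : ℝ => fderiv ℝ u (s • x) :=
    (hu.continuous_fderiv one_ne_zero).comp (continuous_id.smul continuous_const)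
  have hcont : Continuous g' := hcf.clm_apply continuous_const
  have key : u x = -∫ s in (1:ℝ)..T, g' s := by
    rw [intervalIntegral.integral_eq_sub_of_hasDerivAt (fun s _ => hderiv s)
      (hcont.intervalIntegrable 1 T), hzero T le_rfl, one_smul]
    ring
  have hb1 : ‖u x‖ ≤ ∫ s in (1:ℝ)..T, ‖fderiv ℝ u (s • x)‖ * ‖x‖ := by
    rw [key, norm_neg]
    refine (intervalIntegral.norm_integral_le_integral_norm hT1).trans ?_
    apply intervalIntegral.integral_mono_on hT1
    · exact hcont.norm.intervalIntegrable 1 T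
    · exact (hcf.norm.mul continuous_const).intervalIntegrable 1 T
    · intro s _
      exact ContinuousLinearMap.le_opNorm _ x
  rw [ENNReal.div_le_iff (ENNReal.coe_ne_zero.mpr (nnnorm_ne_zero_iff.mpr hx)) coe_ne_top]
  calc (‖u x‖₊ : ℝ≥0∞) = ENNReal.ofReal ‖u x‖ := (ofReal_norm _).symm
    _ ≤ ENNReal.ofReal (∫ s in (1:ℝ)..T, ‖fderiv ℝ u (s • x)‖ * ‖x‖) :=
        ENNReal.ofReal_le_ofReal hb1
    _ = ∫⁻ s in Ioc (1:ℝ) T, ENNReal.ofReal (‖fderiv ℝ u (s • x)‖ * ‖x‖) := by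
        rw [intervalIntegral.integral_of_le hT1,
          ofReal_integral_eq_lintegral_ofReal (f := fun s => ‖fderiv ℝ u (s • x)‖ * ‖x‖) ((hcf.norm.mul continuous_const).integrableOn_Ioc)
            (Filter.Eventually.of_forall fun s => mul_nonneg (norm_nonneg _) (norm_nonneg _))]
    _ = (∫⁻ s in Ioc (1:ℝ) T, (‖fderiv ℝ u (s • x)‖₊ : ℝ≥0∞)) * ‖x‖₊ := by
        rw [← lintegral_mul_const' _ _ coe_ne_top]
        congr 1
        ext s
        rw [ENNReal.ofReal_mul (norm_nonneg _), ofReal_norm, enorm_eq_nnnorm,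
          ofReal_norm, enorm_eq_nnnorm]
    _ ≤ (∫⁻ s in Ioi (1:ℝ), (‖fderiv ℝ u (s • x)‖₊ : ℝ≥0∞)) * ‖x‖₊ := by
        gcongr
        exact Ioc_subset_Ioi_self

private lemma wsi_lintegral_scale {N : ℕ} (f : EuclideanSpace ℝ (Fin N) → ℝ≥0∞)
    (hf : Measurable f) {s : ℝ} (hs : 0 < s) :
    ∫⁻ x, f (s • x) = ENNReal.ofReal (s ^ (-(N:ℝ))) * ∫⁻ x, f x := by
  have h1 : ∫⁻ x, f (s • x) = ∫⁻ y, f y ∂(Measure.map (s • ·) volume) :=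
    (lintegral_map hf (continuous_const_smul s).measurable).symm
  rw [h1, Measure.map_addHaar_smul volume hs.ne', lintegral_smul_measure]
  congr 2
  have hfr : finrank ℝ (EuclideanSpace ℝ (Fin N)) = N := by
    simp [finrank_euclideanSpace]
  rw [hfr, abs_of_pos (by positivity), Real.rpow_neg hs.le, Real.rpow_natCast]

private lemma wsi_hardy {N : ℕ} (hN : 2 ≤ N) (u : EuclideanSpace ℝ (Fin N) → ℝ)
    (hu : ContDiff ℝ 1 u) (h2u : HasCompactSupport u) :
    ∫⁻ x, (‖u x‖₊ : ℝ≥0∞) / ‖x‖₊ ≤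
      ENNReal.ofReal (((N:ℝ) - 1)⁻¹) * ∫⁻ x, (‖fderiv ℝ u x‖₊ : ℝ≥0∞) := by
  have hN1 : (1:ℝ) < N := by
    have : (2:ℝ) ≤ N := by exact_mod_cast hN
    linarith
  haveI : Nontrivial (EuclideanSpace ℝ (Fin N)) :=
    nontrivial_of_finrank_pos (R := ℝ) (by simp [finrank_euclideanSpace]; omega)
  have hae : ∀ᵐ x : EuclideanSpace ℝ (Fin N), x ≠ 0 := by
    rw [ae_iff]
    have h0 : {a : EuclideanSpace ℝ (Fin N) | ¬a ≠ 0} = {0} := by ext y; simp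
    rw [h0]
    exact measure_singleton 0
  have hcf : Continuous (fderiv ℝ u) := hu.continuous_fderiv one_ne_zero
  set D := ∫⁻ x : EuclideanSpace ℝ (Fin N), (‖fderiv ℝ u x‖₊ : ℝ≥0∞) with hD
  have hDfin : D ≠ ⊤ :=
    ne_of_lt (hcf.integrable_of_hasCompactSupport (h2u.fderiv ℝ)).2
  have hmeasf : Measurable fun x : EuclideanSpace ℝ (Fin N) => (‖fderiv ℝ u x‖₊ : ℝ≥0∞) :=
    hcf.measurable.nnnorm.coe_nnreal_ennreal
  have hlt : -(N:ℝ) < -1 := by linarith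
  calc ∫⁻ x, (‖u x‖₊ : ℝ≥0∞) / ‖x‖₊
      ≤ ∫⁻ x, ∫⁻ s in Ioi (1:ℝ), (‖fderiv ℝ u (s • x)‖₊ : ℝ≥0∞) := by
        apply lintegral_mono_ae
        filter_upwards [hae] with x hx
        exact wsi_hardy_pointwise u hu h2u hx
    _ = ∫⁻ s in Ioi (1:ℝ), ∫⁻ x, (‖fderiv ℝ u (s • x)‖₊ : ℝ≥0∞) := by
        apply lintegral_lintegral_swap
        apply Measurable.aemeasurable
        exact (hcf.comp (continuous_snd.smul continuous_fst)).nnnorm.measurable.coe_nnreal_ennreal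
    _ = ∫⁻ s in Ioi (1:ℝ), ENNReal.ofReal (s ^ (-(N:ℝ))) * D := by
        apply setLIntegral_congr_fun measurableSet_Ioi
        intro s hs
        exact wsi_lintegral_scale _ hmeasf (lt_trans one_pos hs)
    _ = (∫⁻ s in Ioi (1:ℝ), ENNReal.ofReal (s ^ (-(N:ℝ)))) * D :=
        lintegral_mul_const' D _ hDfin
    _ = ENNReal.ofReal (((N:ℝ) - 1)⁻¹) * D := by
        congr 1
        rw [← ofReal_integral_eq_lintegral_ofReal (integrableOn_Ioi_rpow_of_lt hlt one_pos) ?_,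
          integral_Ioi_rpow_of_lt hlt one_pos]
        · congr 1
          rw [Real.one_rpow]
          have h1 : -(N:ℝ) + 1 ≠ 0 := by linarith
          have h2 : (N:ℝ) - 1 ≠ 0 := by linarith
          field_simp
          ring
        · filter_upwards [ae_restrict_mem measurableSet_Ioi] with s hs
          exact Real.rpow_nonneg (le_of_lt (lt_trans one_pos hs)) _


/-- **Weighted Sobolev (Caffarelli–Kohn–Nirenberg type) inequality in `BV`-scaling**: for
`0 ≤ b ≤ 1` and `1*_b = N/(N-1+b)` there is a constant `C > 0` such that for all
`u ∈ C_c^∞(ℝ^N)`,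
`(∫ |u|^{1*_b} / ‖x‖^{b·1*_b})^{1/1*_b} ≤ C ∫ ‖∇u‖`. -/
theorem weighted_sobolev_inequality (N : ℕ) (hN : 2 ≤ N) (b : ℝ) (hb0 : 0 ≤ b) (hb1 : b ≤ 1) :
    ∃ C > (0 : ℝ), ∀ u : EuclideanSpace ℝ (Fin N) → ℝ, ContDiff ℝ (⊤ : ℕ∞) u → HasCompactSupport u →
      (∫ x : EuclideanSpace ℝ (Fin N),
          |u x| ^ ((N : ℝ) / (N - 1 + b)) / ‖x‖ ^ (b * ((N : ℝ) / (N - 1 + b))))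
          ^ ((N - 1 + b) / (N : ℝ)) ≤
        C * ∫ x : EuclideanSpace ℝ (Fin N), ‖gradient u x‖ := by
  have hN1 : (1:ℝ) < N := by
    have : (2:ℝ) ≤ N := by exact_mod_cast hN
    linarith
  have hNne : (N:ℝ) ≠ 0 := by linarith
  have hN1ne : (N:ℝ) - 1 ≠ 0 := by linarith
  haveI : Nontrivial (EuclideanSpace ℝ (Fin N)) :=
    nontrivial_of_finrank_pos (R := ℝ) (by simp [finrank_euclideanSpace]; omega)
  have hae : ∀ᵐ x : EuclideanSpace ℝ (Fin N), x ≠ 0 := by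
    rw [ae_iff]
    have h0 : {a : EuclideanSpace ℝ (Fin N) | ¬a ≠ 0} = {0} := by ext y; simp
    rw [h0]
    exact measure_singleton 0
  set p' : ℝ := (N:ℝ) / ((N:ℝ) - 1) with hp'def
  set q : ℝ := (N : ℝ) / (N - 1 + b) with hqdef
  have hden : (0:ℝ) < (N:ℝ) - 1 + b := by linarith
  have hq0 : 0 < q := div_pos (by linarith) hden
  have hp'0 : 0 ≤ p' := le_of_lt (div_pos (by linarith) (by linarith))
  set α : ℝ := q * (1 - b) * ((N:ℝ) - 1) / N with hαdef
  set β : ℝ := b * q with hβdef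
  have hα : 0 ≤ α := by
    apply div_nonneg _ (by linarith : (0:ℝ) ≤ N)
    exact mul_nonneg (mul_nonneg hq0.le (by linarith)) (by linarith)
  have hβ : 0 ≤ β := mul_nonneg hb0 hq0.le
  have hαβ : α + β = 1 := by
    rw [hαdef, hβdef, hqdef]
    field_simp
    ring
  have hpq : p' * α + β = q := by
    rw [hαdef, hβdef, hqdef, hp'def]
    field_simp
    ring
  set C₁ : NNReal :=
    lintegralPowLePowLIntegralFDerivConst (volume : Measure (EuclideanSpace ℝ (Fin N))) p'
    with hC₁
  set K : ℝ≥0∞ := ((C₁ : ℝ≥0∞) ^ α * (ENNReal.ofReal (((N:ℝ) - 1)⁻¹)) ^ β) ^ (1/q) with hK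
  have hKfin : K ≠ ⊤ := by
    apply ENNReal.rpow_ne_top_of_nonneg (by positivity)
    exact ENNReal.mul_ne_top (ENNReal.rpow_ne_top_of_nonneg hα coe_ne_top)
      (ENNReal.rpow_ne_top_of_nonneg hβ ofReal_ne_top)
  refine ⟨K.toReal + 1, by positivity, ?_⟩
  intro u hu h2u
  have hu1 : ContDiff ℝ 1 u := hu.of_le (by simp)
  have hcf : Continuous (fderiv ℝ u) := hu1.continuous_fderiv one_ne_zero
  set D := ∫⁻ x : EuclideanSpace ℝ (Fin N), (‖fderiv ℝ u x‖₊ : ℝ≥0∞) with hD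
  have hIntD : Integrable (fderiv ℝ u) := hcf.integrable_of_hasCompactSupport (h2u.fderiv ℝ)
  have hDfin : D ≠ ⊤ := ne_of_lt hIntD.2
  have hIeq : ∫ x : EuclideanSpace ℝ (Fin N), ‖gradient u x‖ = D.toReal := by
    have hg : ∀ x : EuclideanSpace ℝ (Fin N), ‖gradient u x‖ = ‖fderiv ℝ u x‖ := fun x => by
      simp [gradient, LinearIsometryEquiv.norm_map]
    simp_rw [hg]
    exact integral_norm_eq_lintegral_enorm hIntD.1
  set f : EuclideanSpace ℝ (Fin N) → ℝ := fun x => |u x| ^ q / ‖x‖ ^ β with hf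
  have hfm : AEStronglyMeasurable f volume := by
    apply Measurable.aestronglyMeasurable
    exact ((hu.continuous.abs.measurable).pow_const q).div
      ((continuous_norm.measurable).pow_const β)
  have hf0 : 0 ≤ᵐ[volume] f :=
    Filter.Eventually.of_forall fun x =>
      div_nonneg (Real.rpow_nonneg (abs_nonneg _) _) (Real.rpow_nonneg (norm_nonneg _) _)
  rw [integral_eq_lintegral_of_nonneg_ae hf0 hfm, hIeq]
  set A := ∫⁻ x, ENNReal.ofReal (f x) with hA
  have hAeq : A = ∫⁻ x : EuclideanSpace ℝ (Fin N),
      ((‖u x‖₊ : ℝ≥0∞) ^ p') ^ α * ((‖u x‖₊ : ℝ≥0∞) / ‖x‖₊) ^ β := by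
    apply lintegral_congr_ae
    filter_upwards [hae] with x hx
    have hx0 : (0:ℝ) < ‖x‖ := norm_pos_iff.mpr hx
    rw [hf]
    rw [ENNReal.ofReal_div_of_pos (Real.rpow_pos_of_pos hx0 _),
      ← ENNReal.ofReal_rpow_of_nonneg (abs_nonneg _) hq0.le,
      ← ENNReal.ofReal_rpow_of_nonneg (norm_nonneg _) hβ,
      ← Real.enorm_eq_ofReal_abs, enorm_eq_nnnorm, ofReal_norm, enorm_eq_nnnorm,
      ← ENNReal.rpow_mul, ENNReal.div_rpow_of_nonneg _ _ hβ,
      ← mul_div_assoc, ← ENNReal.rpow_add_of_nonneg _ _ (mul_nonneg hp'0 hα) hβ, hpq]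
  have hFm : Measurable fun x : EuclideanSpace ℝ (Fin N) => (‖u x‖₊ : ℝ≥0∞) ^ p' :=
    (hu.continuous.measurable.nnnorm.coe_nnreal_ennreal).pow_const _
  have hGm : Measurable fun x : EuclideanSpace ℝ (Fin N) => (‖u x‖₊ : ℝ≥0∞) / ‖x‖₊ :=
    (hu.continuous.measurable.nnnorm.coe_nnreal_ennreal).div
      continuous_nnnorm.measurable.coe_nnreal_ennreal
  have hHolder : A ≤ (∫⁻ x, (‖u x‖₊ : ℝ≥0∞) ^ p') ^ α *
      (∫⁻ x, (‖u x‖₊ : ℝ≥0∞) / ‖x‖₊) ^ β := by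
    rw [hAeq]
    exact ENNReal.lintegral_mul_norm_pow_le hFm.aemeasurable hGm.aemeasurable hα hβ hαβ
  have hSob : ∫⁻ x, (‖u x‖₊ : ℝ≥0∞) ^ p' ≤ (C₁ : ℝ≥0∞) * D ^ p' := by
    have hp' : Real.HolderConjugate (finrank ℝ (EuclideanSpace ℝ (Fin N))) p' := by
      have hfr : finrank ℝ (EuclideanSpace ℝ (Fin N)) = N := by simp [finrank_euclideanSpace]
      rw [hfr]
      simpa [Real.conjExponent, hp'def] using Real.HolderConjugate.conjExponent hN1
    exact lintegral_pow_le_pow_lintegral_fderiv volume hu1 h2u hp'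
  have hHardy : ∫⁻ x, (‖u x‖₊ : ℝ≥0∞) / ‖x‖₊ ≤ ENNReal.ofReal (((N:ℝ) - 1)⁻¹) * D :=
    wsi_hardy hN u hu1 h2u
  have hchain2 : A ≤ ((C₁ : ℝ≥0∞) ^ α * (ENNReal.ofReal (((N:ℝ) - 1)⁻¹)) ^ β) * D ^ q := by
    refine hHolder.trans ?_
    have h1 : (∫⁻ x, (‖u x‖₊ : ℝ≥0∞) ^ p') ^ α * (∫⁻ x, (‖u x‖₊ : ℝ≥0∞) / ‖x‖₊) ^ β ≤
        ((C₁ : ℝ≥0∞) * D ^ p') ^ α * (ENNReal.ofReal (((N:ℝ) - 1)⁻¹) * D) ^ β := by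
      gcongr
    refine h1.trans_eq ?_
    have h2 : D ^ (p' * α) * D ^ β = D ^ q := by
      rw [← ENNReal.rpow_add_of_nonneg _ _ (mul_nonneg hp'0 hα) hβ, hpq]
    calc ((C₁ : ℝ≥0∞) * D ^ p') ^ α * (ENNReal.ofReal (((N:ℝ) - 1)⁻¹) * D) ^ β
        = ((C₁ : ℝ≥0∞) ^ α * (ENNReal.ofReal (((N:ℝ) - 1)⁻¹)) ^ β) * (D ^ (p' * α) * D ^ β) := by
          rw [ENNReal.mul_rpow_of_nonneg _ _ hα, ENNReal.mul_rpow_of_nonneg _ _ hβ,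
            ← ENNReal.rpow_mul]
          ring
      _ = _ := by rw [h2]
  have hfinal : A ^ (1/q) ≤ K * D := by
    calc A ^ (1/q) ≤ (((C₁ : ℝ≥0∞) ^ α * (ENNReal.ofReal (((N:ℝ) - 1)⁻¹)) ^ β) * D ^ q) ^ (1/q) :=
          ENNReal.rpow_le_rpow hchain2 (by positivity)
      _ = K * D := by
          rw [ENNReal.mul_rpow_of_nonneg _ _ (by positivity), ← ENNReal.rpow_mul,
            mul_one_div, div_self hq0.ne', ENNReal.rpow_one, hK]
  have hexp : ((N:ℝ) - 1 + b) / (N : ℝ) = 1/q := by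
    rw [hqdef]
    field_simp
  rw [hexp, ENNReal.toReal_rpow]
  calc (A ^ (1/q)).toReal ≤ (K * D).toReal :=
        ENNReal.toReal_mono (ENNReal.mul_ne_top hKfin hDfin) hfinal
    _ = K.toReal * D.toReal := ENNReal.toReal_mul
    _ ≤ (K.toReal + 1) * D.toReal := by
        have h1 : 0 ≤ D.toReal := ENNReal.toReal_nonneg
        nlinarith
end
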